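/- Let A be an n×n complex matrix of index k and let m ≥ 1 be an integer. Then an n×n complex matrix X satisfies AX = (A⊕)^m A^m P_{A^m} and R(X) ⊆ R(A^k) if and only if X = A^{#_m}; in particular this system is consistent and has a unique solution. -/

import Mathlib

open Matrix

/-- `X` is the Moore–Penrose inverse of `A` (four Penrose equations). -/
def MoorePenroseOf {n : ℕ} (A X : Matrix (Fin n) (Fin n) ℂ) : Prop :=
  A * X * A = A ∧ X * A * X = X ∧ (A * X)ᴴ = A * X ∧ (X * A)ᴴ = X * A

/-- Column space of a square complex matrix. -/
noncomputable def colSpace {n : ℕ} (A : Matrix (Fin n) (Fin n) ℂ) : Submodule ℂ (Fin n → ℂ) :=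
  LinearMap.range A.mulVecLin

/-- Null space of a square complex matrix. -/
noncomputable def nullSpace {n : ℕ} (A : Matrix (Fin n) (Fin n) ℂ) : Submodule ℂ (Fin n → ℂ) :=
  LinearMap.ker A.mulVecLin

/-- `k` is the index of `A`: the smallest nonnegative integer with
`rank(A^k) = rank(A^(k+1))`. -/
def HasIndex {n : ℕ} (A : Matrix (Fin n) (Fin n) ℂ) (k : ℕ) : Prop :=
  (A ^ k).rank = (A ^ (k + 1)).rank ∧ ∀ j < k, (A ^ j).rank ≠ (A ^ (j + 1)).rank

/-- `X` is the core-EP inverse of `A` (where `k = Ind(A)`): `XAX = X` and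
`R(X) = R(Xᴴ) = R(A^k)`. -/
def IsCoreEP {n : ℕ} (A X : Matrix (Fin n) (Fin n) ℂ) (k : ℕ) : Prop :=
  X * A * X = X ∧ colSpace X = colSpace (A ^ k) ∧ colSpace Xᴴ = colSpace (A ^ k)

/-! `A⊕ A` is an idempotent whose range contains `R(A⊕) = R(A^k)`, so a solution `X` with
`R(X) ⊆ R(A^k)` satisfies `X = A⊕ A X = A⊕ (A⊕)^m A^m P_{A^m}`. Conversely `A A⊕` is an idempotent
with range `R(A^(k+1)) = R(A^k)`, hence `A A⊕ A⊕ = A⊕` and `A (A⊕)^(m+1) = (A⊕)^m` for `m ≥ 1`. -/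

variable {n : ℕ}

lemma colSpace_mul_le (A B : Matrix (Fin n) (Fin n) ℂ) : colSpace (A * B) ≤ colSpace A := by
  rw [colSpace, colSpace, mulVecLin_mul, LinearMap.range_comp]
  exact LinearMap.map_le_range

lemma colSpace_mul (A B : Matrix (Fin n) (Fin n) ℂ) :
    colSpace (A * B) = (colSpace B).map A.mulVecLin := by
  rw [colSpace, colSpace, mulVecLin_mul, LinearMap.range_comp]

lemma mul_eq_of_idempotent_of_colSpace_le {E B : Matrix (Fin n) (Fin n) ℂ}
    (hE : E * E = E) (h : colSpace B ≤ colSpace E) : E * B = B := by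
  refine ext_iff_mulVec.mpr fun v => ?_
  obtain ⟨w, hw⟩ := h ⟨v, rfl⟩
  change E *ᵥ w = B *ᵥ v at hw
  rw [← mulVec_mulVec, ← hw, mulVec_mulVec, hE]

lemma colSpace_pow_succ_eq_of_rank_eq {A : Matrix (Fin n) (Fin n) ℂ} {k : ℕ}
    (hrk : (A ^ k).rank = (A ^ (k + 1)).rank) : colSpace (A ^ (k + 1)) = colSpace (A ^ k) :=
  Submodule.eq_of_le_of_finrank_eq (pow_succ A k ▸ colSpace_mul_le _ _) hrk.symm

namespace IsCoreEP

variable {A X : Matrix (Fin n) (Fin n) ℂ} {k : ℕ}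

lemma mul_mul_of_colSpace_le (hX : IsCoreEP A X k) {B : Matrix (Fin n) (Fin n) ℂ}
    (hB : colSpace B ≤ colSpace (A ^ k)) : X * A * B = B := by
  obtain ⟨hXAX, hcol, -⟩ := hX
  refine mul_eq_of_idempotent_of_colSpace_le (by rw [← mul_assoc, hXAX]) ?_
  calc colSpace B ≤ colSpace X := hcol ▸ hB
    _ = colSpace (X * A * X) := by rw [hXAX]
    _ ≤ colSpace (X * A) := colSpace_mul_le _ _

lemma mul_mul_self (hX : IsCoreEP A X k) (hrk : (A ^ k).rank = (A ^ (k + 1)).rank) :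
    A * X * X = X := by
  obtain ⟨hXAX, hcol, -⟩ := hX
  refine mul_eq_of_idempotent_of_colSpace_le
    (by rw [mul_assoc, ← mul_assoc X A X, hXAX]) (le_of_eq ?_)
  rw [colSpace_mul, hcol, ← colSpace_mul, ← pow_succ', colSpace_pow_succ_eq_of_rank_eq hrk]

lemma mul_pow_succ (hX : IsCoreEP A X k) (hrk : (A ^ k).rank = (A ^ (k + 1)).rank)
    {m : ℕ} (hm : 1 ≤ m) : A * X ^ (m + 1) = X ^ m := by
  obtain ⟨p, rfl⟩ := Nat.exists_eq_add_of_le' hm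
  rw [pow_succ' X (p + 1), pow_succ' X p, ← mul_assoc, ← mul_assoc, hX.mul_mul_self hrk]

end IsCoreEP

theorem stmt_13_general {n k m : ℕ} (hm : 1 ≤ m)
    (A CEP AmDag : Matrix (Fin n) (Fin n) ℂ)
    (hInd : HasIndex A k)
    (hCEP : IsCoreEP A CEP k) :
    ∀ X : Matrix (Fin n) (Fin n) ℂ,
      (A * X = CEP ^ m * A ^ m * (A ^ m * AmDag) ∧
       colSpace X ≤ colSpace (A ^ k)) ↔
      X = CEP ^ (m + 1) * A ^ m * (A ^ m * AmDag) := by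
  have hsol : CEP ^ (m + 1) * A ^ m * (A ^ m * AmDag) =
      CEP * (CEP ^ m * A ^ m * (A ^ m * AmDag)) := by
    simp only [pow_succ', mul_assoc]
  intro X
  constructor
  · rintro ⟨hAX, hX⟩
    rw [hsol, ← hAX, ← mul_assoc, hCEP.mul_mul_of_colSpace_le hX]
  · rintro rfl
    refine ⟨by simp only [← mul_assoc, hCEP.mul_pow_succ hInd.1 hm], ?_⟩
    rw [hsol, ← hCEP.2.1]
    exact colSpace_mul_le _ _

/-- the system `AX = (A⊕)^m A^m P_{A^m}`, `R(X) ⊆ R(A^k)`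
has `A^{#_m}` as its unique solution. -/
theorem stmt_13 {n k m : ℕ} (hm : 1 ≤ m)
    (A CEP AmDag : Matrix (Fin n) (Fin n) ℂ)
    (hInd : HasIndex A k)
    (hCEP : IsCoreEP A CEP k)
    (hMP : MoorePenroseOf (A ^ m) AmDag) :
    ∀ X : Matrix (Fin n) (Fin n) ℂ,
      (A * X = CEP ^ m * A ^ m * (A ^ m * AmDag) ∧
       colSpace X ≤ colSpace (A ^ k)) ↔
      X = CEP ^ (m + 1) * A ^ m * (A ^ m * AmDag) :=
  stmt_13_general hm A CEP AmDag hInd hCEP
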